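/- Let A be a self-adjoint operator on a Hilbert space H. Then u ∈ B(A)*₀ (the closure of H in B(A)*) if and only if u ∈ B(A)* and lim_{R→∞} R^{-1/2} ‖F(|A| < R) u‖ = 0. -/

import Mathlib

open MeasureTheory Filter Topology
open scoped ENNReal

noncomputable section

/-- The dyadic radii: `R_0 = 0`, `R_j = 2^(j-1)` for `j ≥ 1`
(here indexed so that `dyadicR (k+1) = 2^k`). -/
def dyadicR : ℕ → ℝ
  | 0 => 0
  | k + 1 => 2 ^ k

/-- For the self-adjoint multiplication operator by the real function `a` on `L²(μ)`,
the norm of the spectral block `F(R_k ≤ |A| < R_{k+1}) u`, i.e. of the restriction of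
`u` to `{R_k ≤ |a| < R_{k+1}}`, valued in `ℝ≥0∞`. -/
def blockE {α : Type*} [MeasurableSpace α] (μ : Measure α) (a : α → ℝ) (u : α → ℂ)
    (k : ℕ) : ℝ≥0∞ :=
  eLpNorm (Set.indicator {x | dyadicR k ≤ |a x| ∧ |a x| < dyadicR (k + 1)} u) 2 μ

/-- The Besov norm `‖u‖_{B(a)} = Σ_j R_j^{1/2} ‖F_j u‖` of the multiplication
operator by `a` on `L²(μ)`, valued in `ℝ≥0∞`; `u ∈ B(a)` iff this is finite. -/
def besovE {α : Type*} [MeasurableSpace α] (μ : Measure α) (a : α → ℝ) (u : α → ℂ) :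
    ℝ≥0∞ :=
  ∑' k : ℕ, ENNReal.ofReal (Real.sqrt (dyadicR (k + 1))) * blockE μ a u k

/-- The dual Besov norm `‖u‖_{B(a)*} = sup_j R_j^{-1/2} ‖F_j u‖`, valued in `ℝ≥0∞`. -/
def dualE {α : Type*} [MeasurableSpace α] (μ : Measure α) (a : α → ℝ) (u : α → ℂ) :
    ℝ≥0∞ :=
  ⨆ k : ℕ, (ENNReal.ofReal (Real.sqrt (dyadicR (k + 1))))⁻¹ * blockE μ a u k

/-! Write `D u` for the dual Besov norm and `T u R = R^{-1/2} ‖F(|A| < R) u‖`.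
Cutting `F(|A| < R)` into the dyadic shells below `R` and summing the geometric series of
their weights gives `T u R ≤ 6 D u` for `R ≥ 1`; as `T v R → 0` for `v ∈ L²`,
approximability of `u` by `L²` in `D` forces `T u R → 0`. Conversely, the truncations
`F(|A| < 2^n) u` lie in `L²` as soon as `D u < ∞`, and the remainder `u - F(|A| < 2^n) u`
only has shells beyond `2^n`, the `k`-th of which is bounded by `T u (2^k)`. -/

lemma dyadicR_succ (k : ℕ) : dyadicR (k + 1) = 2 ^ k := rfl

lemma monotone_dyadicR : Monotone dyadicR := by
  refine monotone_nat_of_le_succ fun k => ?_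
  cases k with
  | zero => simp [dyadicR]
  | succ k => exact pow_le_pow_right₀ one_le_two k.le_succ

def dyadicWeight (k : ℕ) : ℝ≥0∞ := ENNReal.ofReal √(dyadicR (k + 1))

lemma one_le_dyadicWeight (k : ℕ) : 1 ≤ dyadicWeight k := by
  simpa [dyadicWeight, dyadicR_succ] using one_le_pow₀ (one_le_two (α := ℝ))

lemma dyadicWeight_ne_zero (k : ℕ) : dyadicWeight k ≠ 0 :=
  (zero_lt_one.trans_le (one_le_dyadicWeight k)).ne'

lemma dyadicWeight_ne_top (k : ℕ) : dyadicWeight k ≠ ⊤ := ENNReal.ofReal_ne_top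

lemma inv_dyadicWeight (k : ℕ) : (dyadicWeight k)⁻¹ = ENNReal.ofReal (√(2 ^ k))⁻¹ := by
  rw [dyadicWeight, dyadicR_succ, ENNReal.ofReal_inv_of_pos (by positivity)]

lemma sum_range_sqrt_two_pow_le (K : ℕ) :
    ∑ k ∈ Finset.range (K + 1), √((2 : ℝ) ^ k) ≤ 4 * √(2 ^ K) := by
  induction K with
  | zero => norm_num
  | succ K ih =>
    have h_succ : √((2 : ℝ) ^ (K + 1)) = √2 * √(2 ^ K) := by
      rw [pow_succ', Real.sqrt_mul zero_le_two]
    -- `4 + √2 ≤ 4 √2` since `3 √2 ≥ 4`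
    have h_sqrt_two : 4 / 3 ≤ √(2 : ℝ) := Real.le_sqrt_of_sq_le (by norm_num)
    rw [Finset.sum_range_succ, h_succ]
    nlinarith [Real.sqrt_nonneg ((2 : ℝ) ^ K)]

lemma sum_range_dyadicWeight_le (K : ℕ) :
    ∑ k ∈ Finset.range (K + 1), dyadicWeight k ≤ ENNReal.ofReal (4 * √(2 ^ K)) := by
  simp only [dyadicWeight, dyadicR_succ]
  rw [← ENNReal.ofReal_sum_of_nonneg fun k _ => Real.sqrt_nonneg _]
  exact ENNReal.ofReal_le_ofReal (sum_range_sqrt_two_pow_le K)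

section

variable {α : Type*}

def dyadicShell (a : α → ℝ) (k : ℕ) : Set α :=
  {x | dyadicR k ≤ |a x| ∧ |a x| < dyadicR (k + 1)}

lemma indicator_abs_lt_dyadicR_eq_sum {E : Type*} [AddCommMonoid E] (a : α → ℝ) (u : α → E)
    (n : ℕ) :
    {x | |a x| < dyadicR (n + 1)}.indicator u
      = ∑ k ∈ Finset.range (n + 1), (dyadicShell a k).indicator u := by
  induction n with
  | zero =>
    ext x
    simp [dyadicShell, dyadicR]
  | succ n ih =>
    have h_mono := monotone_dyadicR (n + 1).le_succ
    have h_union : {x | |a x| < dyadicR (n + 2)}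
        = {x | |a x| < dyadicR (n + 1)} ∪ dyadicShell a (n + 1) := by
      ext x
      simp only [dyadicShell, Set.mem_union, Set.mem_ofPred_eq]
      grind
    have h_disj : Disjoint {x | |a x| < dyadicR (n + 1)} (dyadicShell a (n + 1)) :=
      Set.disjoint_left.2 fun x hlt hshell => (not_lt.2 hshell.1) hlt
    rw [Finset.sum_range_succ, ← ih, h_union, Set.indicator_union_of_disjoint h_disj]
    rfl

variable [MeasurableSpace α] {μ : Measure α} {a : α → ℝ}

lemma measurableSet_abs_lt (ha : Measurable a) (R : ℝ) : MeasurableSet {x | |a x| < R} :=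
  ha.abs measurableSet_Iio

lemma measurableSet_dyadicShell (ha : Measurable a) (k : ℕ) : MeasurableSet (dyadicShell a k) :=
  ha.abs measurableSet_Ico

lemma eLpNorm_indicator_le_of_subset {ε : Type*} [TopologicalSpace ε] [ESeminormedAddMonoid ε]
    {s t : Set α} (hst : s ⊆ t) (f : α → ε) (p : ℝ≥0∞) :
    eLpNorm (s.indicator f) p μ ≤ eLpNorm (t.indicator f) p μ := by
  rw [← Set.inter_eq_left.2 hst, ← Set.indicator_indicator]
  exact eLpNorm_indicator_le _

lemma blockE_eq (u : α → ℂ) (k : ℕ) :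
    blockE μ a u k = eLpNorm ((dyadicShell a k).indicator u) 2 μ := rfl

lemma dualE_eq (u : α → ℂ) : dualE μ a u = ⨆ k, (dyadicWeight k)⁻¹ * blockE μ a u k := rfl

lemma blockE_le_mul_dualE (u : α → ℂ) (k : ℕ) :
    blockE μ a u k ≤ dyadicWeight k * dualE μ a u := by
  rw [← ENNReal.inv_mul_le_iff (dyadicWeight_ne_zero k) (dyadicWeight_ne_top k)]
  exact le_iSup (fun k => (dyadicWeight k)⁻¹ * blockE μ a u k) k

lemma dualE_le_eLpNorm (u : α → ℂ) : dualE μ a u ≤ eLpNorm u 2 μ :=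
  iSup_le fun k => calc
    (dyadicWeight k)⁻¹ * blockE μ a u k ≤ 1 * eLpNorm u 2 μ :=
      mul_le_mul' (ENNReal.inv_le_one.2 (one_le_dyadicWeight k)) (eLpNorm_indicator_le u)
    _ = eLpNorm u 2 μ := one_mul _

lemma dualE_add_le (ha : Measurable a) {f g : α → ℂ} (hf : AEStronglyMeasurable f μ)
    (hg : AEStronglyMeasurable g μ) : dualE μ a (f + g) ≤ dualE μ a f + dualE μ a g := by
  refine iSup_le fun k => ?_
  have h_block : blockE μ a (f + g) k ≤ blockE μ a f k + blockE μ a g k := by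
    simp only [blockE_eq, Set.indicator_add']
    exact eLpNorm_add_le (hf.indicator (measurableSet_dyadicShell ha k))
      (hg.indicator (measurableSet_dyadicShell ha k)) one_le_two
  calc (dyadicWeight k)⁻¹ * blockE μ a (f + g) k
      ≤ (dyadicWeight k)⁻¹ * blockE μ a f k + (dyadicWeight k)⁻¹ * blockE μ a g k := by
        rw [← mul_add]; exact mul_le_mul_right h_block _
    _ ≤ dualE μ a f + dualE μ a g :=
        add_le_add (le_iSup (fun k => (dyadicWeight k)⁻¹ * blockE μ a f k) k)
          (le_iSup (fun k => (dyadicWeight k)⁻¹ * blockE μ a g k) k)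

lemma eLpNorm_indicator_abs_lt_dyadicR_le (ha : Measurable a) {f : α → ℂ}
    (hf : AEStronglyMeasurable f μ) (K : ℕ) :
    eLpNorm ({x | |a x| < dyadicR (K + 1)}.indicator f) 2 μ
      ≤ (∑ k ∈ Finset.range (K + 1), dyadicWeight k) * dualE μ a f := by
  rw [indicator_abs_lt_dyadicR_eq_sum, Finset.sum_mul]
  calc eLpNorm (∑ k ∈ Finset.range (K + 1), (dyadicShell a k).indicator f) 2 μ
      ≤ ∑ k ∈ Finset.range (K + 1), blockE μ a f k :=
        eLpNorm_sum_le (fun k _ => hf.indicator (measurableSet_dyadicShell ha k)) one_le_two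
    _ ≤ ∑ k ∈ Finset.range (K + 1), dyadicWeight k * dualE μ a f :=
        Finset.sum_le_sum fun k _ => blockE_le_mul_dualE f k

lemma memLp_indicator_abs_lt_dyadicR (ha : Measurable a) {f : α → ℂ}
    (hf : AEStronglyMeasurable f μ) (hf_fin : dualE μ a f ≠ ⊤) (K : ℕ) :
    MemLp ({x | |a x| < dyadicR (K + 1)}.indicator f) 2 μ := by
  refine ⟨hf.indicator (measurableSet_abs_lt ha _), ?_⟩
  refine (eLpNorm_indicator_abs_lt_dyadicR_le ha hf K).trans_lt
    (ENNReal.mul_lt_top ?_ hf_fin.lt_top)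
  exact ENNReal.sum_lt_top.2 fun k _ => (dyadicWeight_ne_top k).lt_top

def scaledTruncNorm (μ : Measure α) (a : α → ℝ) (u : α → ℂ) (R : ℝ) : ℝ≥0∞ :=
  ENNReal.ofReal (√R)⁻¹ * eLpNorm ({x | |a x| < R}.indicator u) 2 μ

lemma scaledTruncNorm_le_six_mul_dualE (ha : Measurable a) {f : α → ℂ}
    (hf : AEStronglyMeasurable f μ) {R : ℝ} (hR : 1 ≤ R) :
    scaledTruncNorm μ a f R ≤ 6 * dualE μ a f := by
  obtain ⟨K, hK_le, hK_lt⟩ := exists_nat_pow_near hR one_lt_two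
  -- The ball `|a| < R` lies in the first `K + 2` shells, whose weights add up to `O(√R)`.
  have h_subset : {x | |a x| < R} ⊆ {x | |a x| < dyadicR (K + 2)} := fun x hx => hx.trans hK_lt
  have h_const : (√R)⁻¹ * (4 * √(2 ^ (K + 1))) ≤ 6 := by
    have h_sqrt : √((2 : ℝ) ^ (K + 1)) ≤ √2 * √R := by
      rw [← Real.sqrt_mul zero_le_two, pow_succ']
      exact Real.sqrt_le_sqrt (by linarith)
    have h_sqrt_two : √(2 : ℝ) ≤ 3 / 2 := Real.sqrt_le_iff.2 ⟨by norm_num, by norm_num⟩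
    have hR_pos : 0 < √R := Real.sqrt_pos.2 (by linarith)
    rw [inv_mul_le_iff₀ hR_pos]
    nlinarith
  calc scaledTruncNorm μ a f R
      ≤ ENNReal.ofReal (√R)⁻¹ * (ENNReal.ofReal (4 * √(2 ^ (K + 1))) * dualE μ a f) := by
        refine mul_le_mul_right ?_ _
        refine (eLpNorm_indicator_le_of_subset h_subset f 2).trans ?_
        exact (eLpNorm_indicator_abs_lt_dyadicR_le ha hf (K + 1)).trans
          (mul_le_mul_left (sum_range_dyadicWeight_le (K + 1)) _)
    _ = ENNReal.ofReal ((√R)⁻¹ * (4 * √(2 ^ (K + 1)))) * dualE μ a f := by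
        rw [← mul_assoc, ← ENNReal.ofReal_mul (by positivity)]
    _ ≤ 6 * dualE μ a f := by
        refine mul_le_mul_left ?_ _
        simpa using ENNReal.ofReal_le_ofReal h_const

lemma scaledTruncNorm_add_le (ha : Measurable a) {f g : α → ℂ} (hf : AEStronglyMeasurable f μ)
    (hg : AEStronglyMeasurable g μ) (R : ℝ) :
    scaledTruncNorm μ a (f + g) R ≤ scaledTruncNorm μ a f R + scaledTruncNorm μ a g R := by
  rw [scaledTruncNorm, scaledTruncNorm, scaledTruncNorm, ← mul_add, Set.indicator_add']
  exact mul_le_mul_right (eLpNorm_add_le (hf.indicator (measurableSet_abs_lt ha R))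
    (hg.indicator (measurableSet_abs_lt ha R)) one_le_two) _

lemma tendsto_scaledTruncNorm_of_memLp {v : α → ℂ} (hv : MemLp v 2 μ) :
    Tendsto (scaledTruncNorm μ a v) atTop (𝓝 0) := by
  have h_inv_sqrt : Tendsto (fun R : ℝ => ENNReal.ofReal (√R)⁻¹) atTop (𝓝 0) := by
    simpa using ENNReal.tendsto_ofReal
      (tendsto_inv_atTop_zero.comp Real.tendsto_sqrt_atTop)
  have h_bound : Tendsto (fun R : ℝ => ENNReal.ofReal (√R)⁻¹ * eLpNorm v 2 μ) atTop (𝓝 0) := by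
    simpa using ENNReal.Tendsto.mul_const h_inv_sqrt (Or.inr hv.eLpNorm_ne_top)
  exact tendsto_of_tendsto_of_tendsto_of_le_of_le tendsto_const_nhds h_bound
    (fun _ => zero_le) fun _ => mul_le_mul_right (eLpNorm_indicator_le v) _

lemma dualE_ne_top_of_sub_memLp (ha : Measurable a) {u v : α → ℂ}
    (hu : AEStronglyMeasurable u μ) (hv : MemLp v 2 μ) (h : dualE μ a (u - v) ≠ ⊤) :
    dualE μ a u ≠ ⊤ := by
  have h_split := dualE_add_le ha (hu.sub hv.1) hv.1
  rw [sub_add_cancel] at h_split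
  exact ne_top_of_le_ne_top
    (ENNReal.add_ne_top.2 ⟨h, ((dualE_le_eLpNorm v).trans_lt hv.2).ne⟩) h_split

lemma tendsto_scaledTruncNorm_of_tendsto_dualE_sub (ha : Measurable a) {u : α → ℂ}
    (hu : AEStronglyMeasurable u μ) {v : ℕ → α → ℂ} (hv : ∀ n, MemLp (v n) 2 μ)
    (hv_lim : Tendsto (fun n => dualE μ a (u - v n)) atTop (𝓝 0)) :
    Tendsto (scaledTruncNorm μ a u) atTop (𝓝 0) := by
  rw [ENNReal.tendsto_nhds_zero]
  intro ε hε
  have hε_half : 0 < ε / 2 := ENNReal.half_pos hε.ne'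
  have h_six : Tendsto (fun n => 6 * dualE μ a (u - v n)) atTop (𝓝 0) := by
    simpa using ENNReal.Tendsto.const_mul hv_lim (Or.inr ENNReal.ofNat_ne_top)
  obtain ⟨n, hn⟩ := (ENNReal.tendsto_nhds_zero.1 h_six _ hε_half).exists
  have hu_sub : AEStronglyMeasurable (u - v n) μ := hu.sub (hv n).1
  have h_tail_v :=
    ENNReal.tendsto_nhds_zero.1 (tendsto_scaledTruncNorm_of_memLp (a := a) (hv n)) _ hε_half
  filter_upwards [h_tail_v, eventually_ge_atTop 1] with R hR_v hR
  calc scaledTruncNorm μ a u R = scaledTruncNorm μ a (u - v n + v n) R := by rw [sub_add_cancel]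
    _ ≤ scaledTruncNorm μ a (u - v n) R + scaledTruncNorm μ a (v n) R :=
        scaledTruncNorm_add_le ha hu_sub (hv n).1 R
    _ ≤ ε / 2 + ε / 2 :=
        add_le_add ((scaledTruncNorm_le_six_mul_dualE ha hu_sub hR).trans hn) hR_v
    _ = ε := ENNReal.add_halves ε

lemma dualE_sub_indicator_abs_lt_dyadicR_le (u : α → ℂ) (n : ℕ) :
    dualE μ a (u - {x | |a x| < dyadicR (n + 1)}.indicator u)
      ≤ ⨆ (k) (_ : n < k), scaledTruncNorm μ a u (2 ^ k) := by
  rw [← Set.indicator_compl, dualE_eq]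
  refine iSup_le fun k => ?_
  rw [blockE_eq, Set.indicator_indicator]
  rcases le_or_gt k n with hkn | hnk
  · have h_empty : dyadicShell a k ∩ {x | |a x| < dyadicR (n + 1)}ᶜ = ∅ :=
      Set.sdiff_eq_empty.2 fun x hx => hx.2.trans_le (monotone_dyadicR (Nat.succ_le_succ hkn))
    simp [h_empty]
  · have h_shell : dyadicShell a k ∩ {x | |a x| < dyadicR (n + 1)}ᶜ = dyadicShell a k :=
      Set.inter_eq_left.2 fun x hx => not_lt.2 ((monotone_dyadicR hnk).trans hx.1)
    rw [h_shell, inv_dyadicWeight]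
    exact le_iSup₂_of_le k hnk
      (mul_le_mul_right (eLpNorm_indicator_le_of_subset (fun x hx => hx.2) u 2) _)

lemma tendsto_dualE_sub_indicator_abs_lt_dyadicR {u : α → ℂ}
    (h : Tendsto (scaledTruncNorm μ a u) atTop (𝓝 0)) :
    Tendsto (fun n => dualE μ a (u - {x | |a x| < dyadicR (n + 1)}.indicator u))
      atTop (𝓝 0) := by
  rw [ENNReal.tendsto_nhds_zero] at h ⊢
  intro ε hε
  obtain ⟨N, hN⟩ := eventually_atTop.1
    ((tendsto_pow_atTop_atTop_of_one_lt one_lt_two).eventually (h ε hε))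
  filter_upwards [eventually_ge_atTop N] with n hn
  exact (dualE_sub_indicator_abs_lt_dyadicR_le u n).trans (iSup₂_le fun k hk => hN k (by omega))

end

/-- for a self-adjoint operator `A` (modelled, up to unitary
equivalence, as multiplication by a measurable `a` on `H = L²(μ)`), an element `u`
belongs to `B(A)*₀` — the closure of `H` in `B(A)*`, i.e. `u` is the limit in the
dual Besov norm of a sequence from `H` — if and only if `u ∈ B(A)*` and
`lim_{R→∞} R^{-1/2} ‖F(|A| < R) u‖ = 0`. -/
theorem stmt19 {α : Type*} [MeasurableSpace α] (μ : Measure α) (a : α → ℝ)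
    (ha : Measurable a) (u : α → ℂ) (hu : AEStronglyMeasurable u μ) :
    (∃ v : ℕ → α → ℂ, (∀ n, MemLp (v n) 2 μ) ∧
        Tendsto (fun n => dualE μ a (fun x => u x - v n x)) atTop (𝓝 0)) ↔
      (dualE μ a u ≠ ⊤ ∧
        Tendsto (fun R : ℝ =>
            ENNReal.ofReal ((Real.sqrt R)⁻¹) *
              eLpNorm (Set.indicator {x | |a x| < R} u) 2 μ)
          atTop (𝓝 0)) := by
  constructor
  · rintro ⟨v, hv, hv_lim⟩
    obtain ⟨n, hn⟩ := (hv_lim.eventually_ne ENNReal.zero_ne_top).exists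
    exact ⟨dualE_ne_top_of_sub_memLp ha hu (hv n) hn,
      tendsto_scaledTruncNorm_of_tendsto_dualE_sub ha hu hv hv_lim⟩
  · rintro ⟨h_fin, h_lim⟩
    exact ⟨fun n => {x | |a x| < dyadicR (n + 1)}.indicator u,
      memLp_indicator_abs_lt_dyadicR ha hu h_fin,
      tendsto_dualE_sub_indicator_abs_lt_dyadicR h_lim⟩
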